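/- arXiv:2010.13328 — 2 statements merged into one kernel-verified Lean document; each statement's English description precedes it below -/
import Mathlib

section
/- Let A be a finite σ-structure and k > 0. There is a bijective correspondence between E_k-coalgebras α : A → E_k A and forest covers of the Gaifman graph of A of height ≤ k. Concretely: given a coalgebra α, the relation a ≤ a' iff α(a) ⊑ α(a') is a forest order on A of height ≤ k such that adjacent elements in the Gaifman graph are comparable; and conversely every such forest cover arises from a unique coalgebra. -/
/-- A relational signature: a set of relation symbols with arities. -/
structure Signature where
  symbols : Type
  arity : symbols → ℕ

/-- A relational structure for a signature `σ`. -/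
structure Struct (σ : Signature) where
  carrier : Type
  rel : ∀ r : σ.symbols, (Fin (σ.arity r) → carrier) → Prop

/-- Homomorphisms of relational structures. -/
def IsHom {σ : Signature} (A B : Struct σ) (f : A.carrier → B.carrier) : Prop :=
  ∀ r x, A.rel r x → B.rel r (fun i => f (x i))

/-- Nonempty sequences of length at most `k`. -/
def NESeq (A : Type) (k : ℕ) : Type := { l : List A // l ≠ [] ∧ l.length ≤ k }

/-- The last element of a nonempty sequence (the counit of the EF comonad). -/
def lastOf {A : Type} {k : ℕ} (s : NESeq A k) : A := s.1.getLast s.2.1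

/-- Co-Kleisli coextension for the EF comonad: `f*[a₁,…,a_j] = [f[a₁],…,f[a₁,…,a_j]]`. -/
def coext {A B : Type} {k : ℕ} (f : NESeq A k → B) (s : NESeq A k) : NESeq B k :=
  ⟨(List.finRange s.1.length).map fun i =>
      f ⟨s.1.take (i.1 + 1), by
        have h1 := i.2
        have h2 := s.2.2
        constructor
        · apply List.ne_nil_of_length_pos
          simp [List.length_take]
        · simp [List.length_take]; omega⟩, by
    have h1 := s.2.1
    have h2 := s.2.2
    constructor
    · apply List.ne_nil_of_length_pos
      simpa [List.length_pos_iff] using h1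
    · simpa using h2⟩

/-- The Ehrenfeucht–Fraïssé comonad on structures: the universe of `EF k A` consists of
nonempty sequences of length ≤ k over `A`, and a relation holds of a tuple of sequences
iff they are pairwise prefix-comparable and the relation holds in `A` of their last
elements. -/
def EF {σ : Signature} (k : ℕ) (A : Struct σ) : Struct σ where
  carrier := NESeq A.carrier k
  rel r x := (∀ i j, (x i).1 <+: (x j).1 ∨ (x j).1 <+: (x i).1) ∧
    A.rel r (fun i => lastOf (x i))

/-- The Gaifman graph of a structure. -/
def gaifman {σ : Signature} (A : Struct σ) (a a' : A.carrier) : Prop :=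
  a ≠ a' ∧ ∃ (r : σ.symbols) (x : Fin (σ.arity r) → A.carrier) (i j : Fin (σ.arity r)),
    A.rel r x ∧ x i = a ∧ x j = a' ∧ i ≠ j

/-- `α : A → E_k A` is a coalgebra for the EF comonad: it is a homomorphism satisfying
the counit and comultiplication laws. -/
def IsEFCoalg {σ : Signature} (k : ℕ) (A : Struct σ) (α : A.carrier → NESeq A.carrier k) : Prop :=
  IsHom A (EF k A) α ∧
  (∀ a, lastOf (α a) = a) ∧
  (∀ (a : A.carrier) (i : ℕ) (h : i < (α a).1.length),
      (α ((α a).1.get ⟨i, h⟩)).1 = (α a).1.take (i + 1))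

/-- A forest cover of height ≤ k of a graph `(V, adj)`: a forest order in which the
predecessors of any element form a chain of size ≤ k, and adjacent vertices are
comparable. -/
structure ForestCover (V : Type) (adj : V → V → Prop) (k : ℕ) where
  le : V → V → Prop
  le_refl : ∀ a, le a a
  le_antisymm : ∀ a b, le a b → le b a → a = b
  le_trans : ∀ a b c, le a b → le b c → le a c
  pred_chain : ∀ a b c, le b a → le c a → le b c ∨ le c b
  pred_finite : ∀ a, {b | le b a}.Finite
  height : ∀ a, {b | le b a}.ncard ≤ k
  cover : ∀ a b, adj a b → le a b ∨ le b a

/-! A coalgebra `α` is determined by the order `α a ⊑ α a'`: the comultiplication law says that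
the entries of `α a` are exactly the elements below `a`, listed in increasing order, so `α a`
is the branch of the forest leading to `a`. Conversely, listing the (finitely many, linearly
ordered) predecessors of `a` by rank gives a coalgebra, and the homomorphism condition is
exactly the requirement that Gaifman-adjacent elements be comparable. -/

namespace ForestCover

section

variable {V : Type} {adj : V → V → Prop} {k : ℕ} (F : ForestCover V adj k)

theorem ext {G : ForestCover V adj k} (h : F.le = G.le) : F = G := by
  cases F; cases G; cases h; rfl

noncomputable def rank (a : V) : ℕ := {b | F.le b a}.ncard

theorem one_le_rank (a : V) : 1 ≤ F.rank a :=
  (Set.ncard_pos (F.pred_finite a)).mpr ⟨a, F.le_refl a⟩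

theorem rank_mono {a b : V} (h : F.le b a) : F.rank b ≤ F.rank a :=
  Set.ncard_le_ncard (fun _ hc => F.le_trans _ _ _ hc h) (F.pred_finite a)

theorem le_iff_rank_le {a b c : V} (hb : F.le b a) (hc : F.le c a) :
    F.le b c ↔ F.rank b ≤ F.rank c := by
  refine ⟨F.rank_mono, fun h => ?_⟩
  rcases F.pred_chain a b c hb hc with hbc | hcb
  · exact hbc
  · have hsub : {x | F.le x c} ⊆ {x | F.le x b} := fun _ hx => F.le_trans _ _ _ hx hcb
    have heq := Set.eq_of_subset_of_ncard_le hsub h (F.pred_finite b)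
    exact heq.symm.subset (F.le_refl b)

theorem rank_injOn (a : V) : Set.InjOn F.rank {b | F.le b a} := fun _ hb _ hc h =>
  F.le_antisymm _ _ ((F.le_iff_rank_le hb hc).mpr h.le) ((F.le_iff_rank_le hc hb).mpr h.ge)

theorem exists_le_rank_eq {a : V} {m : ℕ} (h1 : 1 ≤ m) (h2 : m ≤ F.rank a) :
    ∃ b, F.le b a ∧ F.rank b = m := by
  have hmaps : F.rank '' {b | F.le b a} ⊆ ↑(Finset.Icc 1 (F.rank a)) := by
    rintro _ ⟨b, hb, rfl⟩
    simpa using ⟨F.one_le_rank b, F.rank_mono hb⟩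
  have himage : F.rank '' {b | F.le b a} = ↑(Finset.Icc 1 (F.rank a)) :=
    Set.eq_of_subset_of_ncard_le hmaps (by simp [(F.rank_injOn a).ncard_image, rank])
  obtain ⟨b, hb, rfl⟩ : m ∈ F.rank '' {b | F.le b a} := by simp [himage, h1, h2]
  exact ⟨b, hb, rfl⟩

-- A junk value unless `1 ≤ m ≤ F.rank a`.
noncomputable def ancestor (a : V) (m : ℕ) : V :=
  haveI : Nonempty V := ⟨a⟩
  Classical.epsilon fun b => F.le b a ∧ F.rank b = m

noncomputable def branch (a : V) : List V :=
  (List.range (F.rank a)).map fun i => F.ancestor a (i + 1)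

theorem length_branch (a : V) : (F.branch a).length = F.rank a := by
  simp [branch]

theorem branch_getElem {a : V} {i : ℕ} (h : i < (F.branch a).length) :
    F.le (F.branch a)[i] a ∧ F.rank (F.branch a)[i] = i + 1 := by
  rw [length_branch] at h
  simp only [branch, List.getElem_map, List.getElem_range, ancestor]
  exact Classical.epsilon_spec (F.exists_le_rank_eq (by omega) (by omega))

theorem eq_branch {a : V} {l : List V} (hlen : l.length = F.rank a)
    (hl : ∀ i (h : i < l.length), F.le l[i] a ∧ F.rank l[i] = i + 1) : l = F.branch a := by
  refine List.ext_getElem (by rw [hlen, length_branch]) fun i h h' => ?_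
  obtain ⟨hle, hrank⟩ := hl i h
  obtain ⟨hle', hrank'⟩ := F.branch_getElem h'
  exact F.rank_injOn a hle hle' (hrank.trans hrank'.symm)

theorem branch_ne_nil (a : V) : F.branch a ≠ [] :=
  List.ne_nil_of_length_pos ((F.length_branch a).symm ▸ F.one_le_rank a)

theorem getLast_branch (a : V) : (F.branch a).getLast (F.branch_ne_nil a) = a := by
  have hpos : 0 < (F.branch a).length := List.length_pos_iff.mpr (F.branch_ne_nil a)
  obtain ⟨hle, hrank⟩ := F.branch_getElem (Nat.sub_lt hpos Nat.one_pos)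
  rw [List.getLast_eq_getElem]
  refine F.rank_injOn a hle (F.le_refl a) ?_
  rw [hrank, Nat.sub_add_cancel hpos, length_branch]

theorem branch_eq_take {a b : V} (h : F.le b a) : F.branch b = (F.branch a).take (F.rank b) := by
  have hb : F.rank b ≤ (F.branch a).length := (F.length_branch a).symm ▸ F.rank_mono h
  refine (F.eq_branch (by simpa using hb) fun i hi => ?_).symm
  rw [List.length_take_of_le hb] at hi
  obtain ⟨hle, hrank⟩ := F.branch_getElem (a := a) (i := i) (by omega)
  rw [List.getElem_take]
  exact ⟨(F.le_iff_rank_le hle h).mpr (by omega), hrank⟩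

theorem le_iff_branch_prefix {a b : V} : F.le b a ↔ F.branch b <+: F.branch a := by
  refine ⟨fun h => F.branch_eq_take h ▸ List.take_prefix _ _, fun h => ?_⟩
  obtain ⟨i, hi, hb⟩ :=
    List.mem_iff_getElem.mp (h.subset (List.getLast_mem (F.branch_ne_nil b)))
  rw [getLast_branch] at hb
  exact hb ▸ (F.branch_getElem hi).1

noncomputable def branchSeq (a : V) : NESeq V k :=
  ⟨F.branch a, F.branch_ne_nil a, (F.length_branch a).symm ▸ F.height a⟩

end

theorem isEFCoalg_branchSeq {σ : Signature} {k : ℕ} {A : Struct σ}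
    (F : ForestCover A.carrier (gaifman A) k) : IsEFCoalg k A F.branchSeq := by
  have hlast : ∀ a, lastOf (F.branchSeq a) = a := F.getLast_branch
  refine ⟨fun r x hr => ⟨fun i j => ?_, by simpa only [hlast] using hr⟩, hlast,
    fun a i h => ?_⟩
  · by_cases hij : x i = x j
    · exact .inl (by simp only [hij, List.prefix_refl])
    · have hadj : gaifman A (x i) (x j) :=
        ⟨hij, r, x, i, j, hr, rfl, rfl, fun h => hij (congrArg x h)⟩
      exact (F.cover _ _ hadj).imp (F.le_iff_branch_prefix).mp (F.le_iff_branch_prefix).mp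
  · obtain ⟨hle, hrank⟩ := F.branch_getElem h
    exact (F.branch_eq_take hle).trans (by rw [hrank]; rfl)

end ForestCover

namespace IsEFCoalg

variable {σ : Signature} {k : ℕ} {A : Struct σ} {α : A.carrier → NESeq A.carrier k}
  (hα : IsEFCoalg k A α)
include hα

theorem injective : Function.Injective α := fun a b h => by
  rw [← hα.2.1 a, ← hα.2.1 b, h]

theorem apply_getElem {a : A.carrier} {i : ℕ} (h : i < (α a).1.length) :
    (α (α a).1[i]).1 = (α a).1.take (i + 1) :=
  hα.2.2 a i h

theorem prefix_iff_mem {a b : A.carrier} : (α b).1 <+: (α a).1 ↔ b ∈ (α a).1 := by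
  constructor
  · intro h
    exact hα.2.1 b ▸ h.subset (List.getLast_mem (α b).2.1)
  · intro h
    obtain ⟨i, hi, rfl⟩ := List.mem_iff_getElem.mp h
    exact hα.apply_getElem hi ▸ List.take_prefix _ _

theorem nodup (a : A.carrier) : (α a).1.Nodup := by
  refine List.nodup_iff_injective_get.mpr fun ⟨i, hi⟩ ⟨j, hj⟩ h => ?_
  have htake : (α a).1.take (i + 1) = (α a).1.take (j + 1) := by
    rw [← hα.apply_getElem hi, ← hα.apply_getElem hj]
    exact congrArg (fun b => (α b).1) h
  have hlen := congrArg List.length htake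
  rw [List.length_take_of_le hi, List.length_take_of_le hj] at hlen
  exact Fin.ext (by simpa using hlen)

theorem ncard_setOf_prefix (a : A.carrier) :
    {b | (α b).1 <+: (α a).1}.ncard = (α a).1.length := by
  classical
  simp_rw [hα.prefix_iff_mem, ← List.coe_toFinset, Set.ncard_coe_finset]
  exact List.toFinset_card_of_nodup (hα.nodup a)

def toForestCover : ForestCover A.carrier (gaifman A) k where
  le a b := (α a).1 <+: (α b).1
  le_refl _ := List.prefix_refl _
  le_antisymm _ _ h h' :=
    hα.injective (Subtype.ext (h.eq_of_length (h.length_le.antisymm h'.length_le)))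
  le_trans _ _ _ := List.IsPrefix.trans
  pred_chain _ _ _ := List.prefix_or_prefix_of_prefix
  pred_finite a := by simpa only [hα.prefix_iff_mem] using (α a).1.finite_toSet
  height a := (hα.ncard_setOf_prefix a).le.trans (α a).2.2
  cover a b := fun ⟨_, r, x, i, j, hr, hi, hj, _⟩ => hi ▸ hj ▸ (hα.1 r x hr).1 i j

theorem rank_toForestCover (a : A.carrier) : hα.toForestCover.rank a = (α a).1.length :=
  hα.ncard_setOf_prefix a

theorem branch_toForestCover (a : A.carrier) : hα.toForestCover.branch a = (α a).1 := by
  refine (hα.toForestCover.eq_branch (hα.rank_toForestCover a).symm fun i hi => ?_).symm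
  refine ⟨hα.prefix_iff_mem.mpr (List.getElem_mem hi), ?_⟩
  rw [hα.rank_toForestCover, hα.apply_getElem hi, List.length_take]
  omega

end IsEFCoalg

noncomputable def coalgEquivForestCover (σ : Signature) (k : ℕ) (A : Struct σ) :
    {α : A.carrier → NESeq A.carrier k // IsEFCoalg k A α} ≃
      ForestCover A.carrier (gaifman A) k where
  toFun α := α.2.toForestCover
  invFun F := ⟨F.branchSeq, F.isEFCoalg_branchSeq⟩
  left_inv α := Subtype.ext <| funext fun a => Subtype.ext (α.2.branch_toForestCover a)
  right_inv F := ForestCover.ext _ <| funext fun _ => funext fun _ =>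
    propext F.le_iff_branch_prefix.symm

theorem EFcoalgebras_equiv_forestCovers_general
    (σ : Signature) (k : ℕ) (A : Struct σ) :
    ∃ e : {α : A.carrier → NESeq A.carrier k // IsEFCoalg k A α} ≃
          ForestCover A.carrier (gaifman A) k,
      ∀ (α : {α : A.carrier → NESeq A.carrier k // IsEFCoalg k A α}) (a a' : A.carrier),
        (e α).le a a' ↔ (α.1 a).1 <+: (α.1 a').1 :=
  ⟨coalgEquivForestCover σ k A, fun _ _ _ => Iff.rfl⟩

/-- For a finite structure `A` and `k > 0`, there is a bijective
correspondence between `E_k`-coalgebras on `A` and forest covers of the Gaifman graph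
of `A` of height ≤ k; concretely, the bijection sends a coalgebra `α` to the forest
order `a ≤ a' ↔ α(a) ⊑ α(a')`. -/
theorem EFcoalgebras_equiv_forestCovers
    (σ : Signature) (k : ℕ) (hk : 0 < k) (A : Struct σ) [Fintype A.carrier] :
    ∃ e : {α : A.carrier → NESeq A.carrier k // IsEFCoalg k A α} ≃
          ForestCover A.carrier (gaifman A) k,
      ∀ (α : {α : A.carrier → NESeq A.carrier k // IsEFCoalg k A α}) (a a' : A.carrier),
        (e α).le a a' ↔ (α.1 a).1 <+: (α.1 a').1 :=
  EFcoalgebras_equiv_forestCovers_general σ k A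
end

section
/- Let G = (V, ⌢) be a finite graph and k > 0. The following are equivalent: (1) G has a tree decomposition of width < k; (2) G has a k-pebble forest cover, i.e. a forest cover (V, ≤) together with a function p : V → {1,…,k} such that whenever v ⌢ v' and v ≤ v', then p(v) ≠ p(w) for every w with v < w ≤ v'. -/
/-- The universe of the pebbling comonad: finite nonempty sequences of moves
`(pebble index, element)`. -/
def Peb (A : Type) (k : ℕ) : Type := { l : List (Fin k × A) // l ≠ [] }

/-- Last element of a pebbling play. -/
def lastP {A : Type} {k : ℕ} (s : Peb A k) : Fin k × A := s.1.getLast s.2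

/-- The pebbling compatibility condition on a pair of plays: they are
prefix-comparable, and the pebble index of the last move of the shorter one does not
reappear in the suffix extending it to the longer one. -/
def pebCond {A : Type} {k : ℕ} (s t : List (Fin k × A)) : Prop :=
  (s <+: t ∧ ∀ m ∈ t.drop s.length, s.getLast?.map Prod.fst ≠ some m.1) ∨
  (t <+: s ∧ ∀ m ∈ s.drop t.length, t.getLast?.map Prod.fst ≠ some m.1)

/-- The pebbling comonad on structures: `P_k A` has universe the finite nonempty
sequences over `{1,…,k} × A`; a relation holds of a tuple of plays iff they are
pairwise prefix-comparable satisfying the pebbling condition, and the relation holds in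
`A` of their last elements. -/
def PebStruct {σ : Signature} (k : ℕ) (A : Struct σ) : Struct σ where
  carrier := Peb A.carrier k
  rel r x := (∀ i j, pebCond (x i).1 (x j).1) ∧ A.rel r (fun i => (lastP (x i)).2)

/-- Co-Kleisli coextension for the pebbling comonad. -/
def coextP {A B : Type} {k : ℕ} (f : Peb A k → B) (s : Peb A k) : Peb B k :=
  ⟨(List.finRange s.1.length).map fun i =>
      ((s.1.get i).1, f ⟨s.1.take (i.1 + 1), by
        have := i.2
        apply List.ne_nil_of_length_pos
        simp only [List.length_take]
        omega⟩), by
    apply List.ne_nil_of_length_pos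
    have := s.2
    simp only [List.length_map, List.length_finRange]
    exact List.length_pos_iff.mpr this⟩

/-- `α : A → P_k A` is a coalgebra for the pebbling comonad. -/
def IsPebCoalg {σ : Signature} (k : ℕ) (A : Struct σ) (α : A.carrier → Peb A.carrier k) : Prop :=
  IsHom A (PebStruct k A) α ∧
  (∀ a, (lastP (α a)).2 = a) ∧
  (∀ (a : A.carrier) (i : ℕ) (h : i < (α a).1.length),
      (α ((α a).1.get ⟨i, h⟩).2).1 = (α a).1.take (i + 1))

/-- A `k`-pebble forest cover of a graph `(V, adj)`: a forest cover together with a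
pebbling function `p : V → {1,…,k}` such that if `v ⌢ v'` with `v ≤ v'` then
`p v ≠ p w` for all `w` with `v < w ≤ v'`. -/
structure PebbleForestCover (V : Type) (adj : V → V → Prop) (k : ℕ) where
  le : V → V → Prop
  le_refl : ∀ a, le a a
  le_antisymm : ∀ a b, le a b → le b a → a = b
  le_trans : ∀ a b c, le a b → le b c → le a c
  pred_chain : ∀ a b c, le b a → le c a → le b c ∨ le c b
  pred_finite : ∀ a, {b | le b a}.Finite
  cover : ∀ a b, adj a b → le a b ∨ le b a
  p : V → Fin k
  pebble : ∀ v v' w, adj v v' → le v v' → le v w → v ≠ w → le w v' → p v ≠ p w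

/-- A tree decomposition of width ≤ w of a graph `(V, adj)`: a tree `(T, ≤)` with a
labelling `λ : T → P(V)` such that every vertex occurs in some label, every edge is
contained in some label, the set of nodes containing a given vertex is path-closed, and
every label has at most `w + 1` elements. -/
structure TreeDecomp (V : Type) (adj : V → V → Prop) (w : ℕ) where
  T : Type
  le : T → T → Prop
  le_refl : ∀ a, le a a
  le_antisymm : ∀ a b, le a b → le b a → a = b
  le_trans : ∀ a b c, le a b → le b c → le a c
  pred_chain : ∀ a b c, le b a → le c a → le b c ∨ le c b
  pred_finite : ∀ a, {b | le b a}.Finite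
  root : T
  root_le : ∀ x, le root x
  label : T → Set V
  td1 : ∀ v, ∃ x, v ∈ label x
  td2 : ∀ v v', adj v v' → ∃ x, v ∈ label x ∧ v' ∈ label x
  td3 : ∀ (v : V) (x y z : T), v ∈ label x → v ∈ label y →
      (le z x ∨ le z y) → (∀ u, le u x → le u y → le u z) → v ∈ label z
  label_finite : ∀ x, (label x).Finite
  width : ∀ x, (label x).ncard ≤ w + 1

/-!
Given a tree decomposition, send each vertex `v` to the node `top v` nearest the root whose bag
contains `v`, and order the vertices by the tree order on their top nodes, refined by a linear
order of the vertices that extends the strict tree order on top nodes. If `v ⌢ v'` and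
`v < u ≤ v'`, then `v` lies in the bag of `top u`, since the bags containing `v` form a subtree.
So it suffices that `p v ≠ p u` whenever `v` lies in the bag of `top u`; in the linear order, all
earlier vertices that conflict with `u` in this way lie in the bag of `top u`, which leaves fewer
than `k` of them, so a greedy colouring with `k` colours works.

Conversely, given a pebble forest cover, add a root below the forest and label each `b` with the
vertices `v ≤ b` whose pebble is not reused on the way from `v` to `b`. These are the pebbles on
the board at `b`, so they carry distinct pebbles; the pebbling condition puts every edge into the
bag of its upper end, and the bags containing `v` form a subtree because a reused pebble stays
lost further down the branch.
-/

theorem SimpleGraph.colorable_of_ncard_lt {V : Type*} [LinearOrder V] [Finite V]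
    (G : SimpleGraph V) {k : ℕ} (h : ∀ w, {v | v < w ∧ G.Adj v w}.ncard < k) :
    G.Colorable k := by
  classical
  have : Fintype V := Fintype.ofFinite V
  suffices ∀ s : Finset V, ∃ c : V → Fin k, ∀ v ∈ s, ∀ w ∈ s, G.Adj v w → c v ≠ c w by
    obtain ⟨c, hc⟩ := this Finset.univ
    exact ⟨.mk c fun hvw => hc _ (Finset.mem_univ _) _ (Finset.mem_univ _) hvw⟩
  intro s
  induction s using Finset.induction_on_max with
  | empty => exact ⟨fun w => ⟨0, Nat.zero_lt_of_lt (h w)⟩, by simp⟩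
  | insert a s hlt ih =>
    obtain ⟨c, hc⟩ := ih
    obtain ⟨col, hcol⟩ : ∃ col, col ∉ c '' {v | v < a ∧ G.Adj v a} := by
      refine (Set.ne_univ_iff_exists_notMem _).mp fun huniv => (h a).not_ge ?_
      calc k = (c '' {v | v < a ∧ G.Adj v a}).ncard := by
            rw [huniv, Set.ncard_univ, Nat.card_fin]
        _ ≤ _ := Set.ncard_image_le
    have hfresh : ∀ v ∈ s, G.Adj v a → c v ≠ col := fun v hv hva hvc =>
      hcol ⟨v, ⟨hlt v hv, hva⟩, hvc⟩
    refine ⟨Function.update c a col, ?_⟩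
    simp only [Finset.mem_insert]
    rintro v (rfl | hv) w (rfl | hw) hvw
    · exact (G.irrefl hvw).elim
    · rw [Function.update_self, Function.update_of_ne (hlt w hw).ne]
      exact (hfresh w hw hvw.symm).symm
    · rw [Function.update_self, Function.update_of_ne (hlt v hv).ne]
      exact hfresh v hv hvw
    · rw [Function.update_of_ne (hlt v hv).ne, Function.update_of_ne (hlt w hw).ne]
      exact hc v hv w hw hvw

theorem IsChain.exists_isLeast_of_finite {α : Type*} [PartialOrder α] {s : Set α}
    (hc : IsChain (· ≤ ·) s) (hs : s.Finite) (hne : s.Nonempty) : ∃ m, IsLeast s m := by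
  obtain ⟨m, hm⟩ := hs.exists_minimal hne
  exact ⟨m, hm.prop, fun u hu => (hc.total hm.prop hu).elim id fun h => (hm.eq_of_le hu h).ge⟩

theorem IsChain.exists_isGreatest_of_finite {α : Type*} [PartialOrder α] {s : Set α}
    (hc : IsChain (· ≤ ·) s) (hs : s.Finite) (hne : s.Nonempty) : ∃ m, IsGreatest s m :=
  hc.symm.exists_isLeast_of_finite (α := αᵒᵈ) hs hne

namespace TreeDecomp

variable {V : Type} {adj : V → V → Prop} {w : ℕ} (D : TreeDecomp V adj w)

instance : PartialOrder D.T where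
  le := D.le
  le_refl := D.le_refl
  le_trans := D.le_trans
  le_antisymm := D.le_antisymm

theorem isChain_Iic (x : D.T) : IsChain (· ≤ ·) (Set.Iic x) :=
  fun a ha b hb _ => D.pred_chain x a b ha hb

theorem exists_isGreatest_Iic_inter_Iic (x y : D.T) :
    ∃ z, IsGreatest (Set.Iic x ∩ Set.Iic y) z :=
  ((D.isChain_Iic x).mono Set.inter_subset_left).exists_isGreatest_of_finite
    ((D.pred_finite x).subset Set.inter_subset_left) ⟨D.root, D.root_le x, D.root_le y⟩

theorem exists_isLeast_label (v : V) : ∃ x, IsLeast {x | v ∈ D.label x} x := by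
  obtain ⟨x₀, hx₀⟩ := D.td1 v
  have hsub : {u | u ≤ x₀ ∧ v ∈ D.label u} ⊆ Set.Iic x₀ := fun _ hu => hu.1
  obtain ⟨m, ⟨-, hm⟩, hmin⟩ := ((D.isChain_Iic x₀).mono hsub).exists_isLeast_of_finite
    ((D.pred_finite x₀).subset hsub) ⟨x₀, le_rfl, hx₀⟩
  refine ⟨m, hm, fun y hy => ?_⟩
  obtain ⟨z, ⟨hzx₀, hzy⟩, hz⟩ := D.exists_isGreatest_Iic_inter_Iic x₀ y
  have hvz : v ∈ D.label z := D.td3 v x₀ y z hx₀ hy (.inl hzx₀) fun u hux₀ huy => hz ⟨hux₀, huy⟩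
  exact (hmin ⟨hzx₀, hvz⟩).trans hzy

noncomputable def top (v : V) : D.T := (D.exists_isLeast_label v).choose

theorem mem_label_top (v : V) : v ∈ D.label (D.top v) := (D.exists_isLeast_label v).choose_spec.1

theorem top_le {v : V} {x : D.T} (h : v ∈ D.label x) : D.top v ≤ x :=
  (D.exists_isLeast_label v).choose_spec.2 h

theorem mem_label_of_top_le_of_le {v : V} {x z : D.T} (hx : v ∈ D.label x) (hvz : D.top v ≤ z)
    (hzx : z ≤ x) : v ∈ D.label z :=
  D.td3 v (D.top v) x z (D.mem_label_top v) hx (.inr hzx) fun u hu _ => D.le_trans u _ z hu hvz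

theorem exists_linearOrder_top_lt [Finite V] :
    ∃ _ : LinearOrder V, ∀ a b, D.top a < D.top b → a < b := by
  let e := Finite.equivFin V
  let f : V → LinearExtension D.T ×ₗ Fin (Nat.card V) :=
    fun v => toLex (toLinearExtension (D.top v), e v)
  have hf : f.Injective := fun a b h => e.injective (congrArg (fun x => (ofLex x).2) h)
  refine ⟨LinearOrder.lift' f hf, fun a b h => Prod.Lex.toLex_lt_toLex.mpr (.inl ?_)⟩
  exact lt_of_le_of_ne (toLinearExtension.monotone h.le) h.ne

section LinearOrder

variable [LinearOrder V]

def forestLE (a b : V) : Prop := D.top a ≤ D.top b ∧ a ≤ b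

def conflictGraph : SimpleGraph V := SimpleGraph.fromRel fun v x => v ∈ D.label (D.top x)

variable {D}

theorem forestLE_total (hD : ∀ a b, D.top a < D.top b → a < b) {a b : V}
    (h : D.top a ≤ D.top b ∨ D.top b ≤ D.top a) : D.forestLE a b ∨ D.forestLE b a := by
  wlog hab : a ≤ b generalizing a b
  · exact (this h.symm (le_of_not_ge hab)).symm
  have htop : D.top a ≤ D.top b := h.elim id fun hba =>
    hba.eq_or_lt.elim Eq.ge fun hlt => absurd (hD b a hlt) hab.not_gt
  exact .inl ⟨htop, hab⟩

theorem mem_label_top_of_conflictGraph_adj_of_lt (hD : ∀ a b, D.top a < D.top b → a < b) {v x : V} (hvx : v < x)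
    (hadj : D.conflictGraph.Adj v x) : v ∈ D.label (D.top x) \ {x} := by
  obtain ⟨hne, hv | hx⟩ := (SimpleGraph.fromRel_adj _ v x).mp hadj
  · exact ⟨hv, hne⟩
  · have htop : D.top x = D.top v :=
      (D.top_le hx).eq_of_not_lt fun hlt => (hD x v hlt).not_gt hvx
    exact ⟨htop ▸ D.mem_label_top v, hne⟩

theorem ncard_conflictGraph_adj_lt (hD : ∀ a b, D.top a < D.top b → a < b) (x : V) :
    {v | v < x ∧ D.conflictGraph.Adj v x}.ncard < w + 1 := by
  have hsub : {v | v < x ∧ D.conflictGraph.Adj v x} ⊆ D.label (D.top x) \ {x} :=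
    fun v hv => mem_label_top_of_conflictGraph_adj_of_lt hD hv.1 hv.2
  calc _ ≤ (D.label (D.top x) \ {x}).ncard := Set.ncard_le_ncard hsub ((D.label_finite _).sdiff)
    _ = (D.label (D.top x)).ncard - 1 := Set.ncard_sdiff_singleton_of_mem (D.mem_label_top x)
    _ < w + 1 := by have := D.width (D.top x); omega

theorem mem_label_top_of_forestLE {v v' u : V} (hadj : adj v v') (hvu : D.forestLE v u)
    (huv' : D.forestLE u v') : v ∈ D.label (D.top u) := by
  obtain ⟨x, hvx, hv'x⟩ := D.td2 v v' hadj
  exact D.mem_label_of_top_le_of_le hvx hvu.1 (huv'.1.trans (D.top_le hv'x))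

variable [Finite V]

noncomputable def toPebbleForestCover (hD : ∀ a b, D.top a < D.top b → a < b) :
    PebbleForestCover V adj (w + 1) where
  le := D.forestLE
  le_refl _ := ⟨le_rfl, le_rfl⟩
  le_antisymm _ _ hab hba := _root_.le_antisymm hab.2 hba.2
  le_trans _ _ _ hab hbc := ⟨hab.1.trans hbc.1, hab.2.trans hbc.2⟩
  pred_chain a _ _ hb hc := forestLE_total hD (D.pred_chain (D.top a) _ _ hb.1 hc.1)
  pred_finite _ := Set.toFinite _
  cover a b hab := by
    obtain ⟨x, hax, hbx⟩ := D.td2 a b hab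
    exact forestLE_total hD (D.pred_chain x _ _ (D.top_le hax) (D.top_le hbx))
  p := (D.conflictGraph.colorable_of_ncard_lt (ncard_conflictGraph_adj_lt hD)).some
  pebble _ _ _ hadj _ hvu hne huv' := SimpleGraph.Coloring.valid _ <|
    (SimpleGraph.fromRel_adj _ _ _).mpr ⟨hne, .inl (mem_label_top_of_forestLE hadj hvu huv')⟩

end LinearOrder

end TreeDecomp

theorem TreeDecomp.nonempty_pebbleForestCover {V : Type} [Finite V] {adj : V → V → Prop} {w : ℕ}
    (D : TreeDecomp V adj w) : Nonempty (PebbleForestCover V adj (w + 1)) :=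
  let ⟨_, hD⟩ := D.exists_linearOrder_top_lt
  ⟨toPebbleForestCover hD⟩


namespace PebbleForestCover

variable {V : Type} {adj : V → V → Prop} {k : ℕ} (P : PebbleForestCover V adj k)

def pebbled (b : V) : Set V :=
  {v | P.le v b ∧ ∀ u, P.le v u → v ≠ u → P.le u b → P.p u ≠ P.p v}

theorem mem_pebbled_self (v : V) : v ∈ P.pebbled v :=
  ⟨P.le_refl v, fun _ hvu hne huv => absurd (P.le_antisymm _ _ hvu huv) hne⟩

theorem mem_pebbled_of_adj {v v' : V} (hadj : adj v v') (hle : P.le v v') : v ∈ P.pebbled v' :=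
  ⟨hle, fun u hvu hne huv' => (P.pebble v v' u hadj hle hvu hne huv').symm⟩

theorem mem_pebbled_of_le {v b c : V} (hv : v ∈ P.pebbled b) (hvc : P.le v c) (hcb : P.le c b) :
    v ∈ P.pebbled c :=
  ⟨hvc, fun u hvu hne huc => hv.2 u hvu hne (P.le_trans u c b huc hcb)⟩

theorem injOn_p_pebbled (b : V) : Set.InjOn P.p (P.pebbled b) := by
  intro v hv v' hv' hp
  by_contra hne
  rcases P.pred_chain b v v' hv.1 hv'.1 with h | h
  · exact hv.2 v' h hne hv'.1 hp.symm
  · exact hv'.2 v h (Ne.symm hne) hv.1 hp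

theorem ncard_pebbled_le (b : V) : (P.pebbled b).ncard ≤ k := by
  calc (P.pebbled b).ncard ≤ (Set.univ : Set (Fin k)).ncard :=
        Set.ncard_le_ncard_of_injOn P.p (fun _ _ => trivial) (P.injOn_p_pebbled b)
    _ = k := by rw [Set.ncard_univ, Nat.card_fin]

def rootedLE : Option V → Option V → Prop
  | none, _ => True
  | some _, none => False
  | some a, some b => P.le a b

end PebbleForestCover

def PebbleForestCover.toTreeDecomp {V : Type} {adj : V → V → Prop} {w : ℕ}
    (P : PebbleForestCover V adj (w + 1)) (hsymm : ∀ a b, adj a b → adj b a) :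
    TreeDecomp V adj w where
  T := Option V
  le := P.rootedLE
  le_refl := by
    rintro (_ | a)
    exacts [trivial, P.le_refl a]
  le_antisymm := by
    rintro (_ | a) (_ | b) hab hba
    exacts [rfl, hba.elim, hab.elim, congrArg some (P.le_antisymm a b hab hba)]
  le_trans := by
    rintro (_ | a) (_ | b) (_ | c) hab hbc
    exacts [trivial, trivial, trivial, trivial, hab.elim, hab.elim, hbc.elim,
      P.le_trans a b c hab hbc]
  pred_chain := by
    rintro a (_ | b) (_ | c) hb hc
    · exact .inl trivial
    · exact .inl trivial
    · exact .inr trivial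
    · cases a with
      | none => exact hb.elim
      | some a => exact P.pred_chain a b c hb hc
  pred_finite := by
    rintro (_ | a)
    exacts [Set.finite_option.mpr (Set.finite_empty.subset fun _ h => h),
      Set.finite_option.mpr (P.pred_finite a)]
  root := none
  root_le _ := trivial
  label x := x.elim ∅ P.pebbled
  td1 v := ⟨some v, P.mem_pebbled_self v⟩
  td2 v v' hadj := by
    rcases P.cover v v' hadj with h | h
    · exact ⟨some v', P.mem_pebbled_of_adj hadj h, P.mem_pebbled_self v'⟩
    · exact ⟨some v, P.mem_pebbled_self v, P.mem_pebbled_of_adj (hsymm v v' hadj) h⟩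
  td3 := by
    rintro v (_ | a) (_ | b) z hva hvb hz hmeet
    · exact hva.elim
    · exact hva.elim
    · exact hvb.elim
    have hvz : P.rootedLE (some v) z := hmeet (some v) hva.1 hvb.1
    cases z with
    | none => exact hvz.elim
    | some c => exact hz.elim (P.mem_pebbled_of_le hva hvz) (P.mem_pebbled_of_le hvb hvz)
  label_finite := by
    rintro (_ | b)
    exacts [Set.finite_empty, (P.pred_finite b).subset fun _ h => h.1]
  width := by
    rintro (_ | b)
    exacts [by simp, P.ncard_pebbled_le b]

theorem treeDecomp_iff_pebbleForestCover_general
    (V : Type) [Fintype V] (adj : V → V → Prop)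
    (hsymm : ∀ a b, adj a b → adj b a)
    (k : ℕ) (hk : 0 < k) :
    Nonempty (TreeDecomp V adj (k - 1)) ↔ Nonempty (PebbleForestCover V adj k) := by
  obtain ⟨w, rfl⟩ := Nat.exists_eq_add_one_of_ne_zero hk.ne'
  rw [Nat.add_sub_cancel]
  exact ⟨fun ⟨D⟩ => D.nonempty_pebbleForestCover, fun ⟨P⟩ => ⟨P.toTreeDecomp hsymm⟩⟩

/-- A finite graph has a tree decomposition of width < k iff it has a
`k`-pebble forest cover. -/
theorem treeDecomp_iff_pebbleForestCover
    (V : Type) [Fintype V] (adj : V → V → Prop)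
    (hsymm : ∀ a b, adj a b → adj b a) (hirr : ∀ a, ¬ adj a a)
    (k : ℕ) (hk : 0 < k) :
    Nonempty (TreeDecomp V adj (k - 1)) ↔ Nonempty (PebbleForestCover V adj k) :=
  treeDecomp_iff_pebbleForestCover_general V adj hsymm k hk
end
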